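/- (Objective gap for the entropy-regularized actor objective.) Let π be a policy with π(s,a) > 0 for all (s,a) and let ℓ ∈ ℝ^{S×A} be the vector ℓ(s,a) := log π(s,a). Then for every q ∈ ℝ^{S×A}, d(π)ᵀ (r − ℓ) − (1−γ) μ0ᵀ Π(π) (q − ℓ) = d(π)ᵀ δ_E, where δ_E := r + γ P Π(π) (q − ℓ) − q is the entropy-adjusted Bellman residual of the critic q. -/

import Mathlib

/-!
The occupancy solves the flow equation `Ψ(π)ᵀ d(π) = (1 - γ) Π(π)ᵀ μ0`, so
`d(π)ᵀ Ψ(π) v = (1 - γ) μ0ᵀ Π(π) v` for every `v`. Taking `v = q - ℓ` gives the identity, because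
`δ_E = (r - ℓ) - Ψ(π) (q - ℓ)`. The matrix `Ψ(π) = I - γ P Π(π)` is invertible since `P Π(π)` is
row-stochastic, so `γ P Π(π)` has `ℓ∞` operator norm `γ < 1`.
-/

open Matrix

noncomputable section

variable {S A : Type*} [Fintype S] [Fintype A] [DecidableEq S] [DecidableEq A]
  [Nonempty S] [Nonempty A]

/-- A policy: nonnegative entries, and for each state the action probabilities sum to one. -/
def IsPolicy (x : S × A → ℝ) : Prop :=
  (∀ p, 0 ≤ x p) ∧ ∀ s : S, ∑ a : A, x (s, a) = 1

/-- A row-stochastic transition matrix. -/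
def IsStochasticMat (P : Matrix (S × A) S ℝ) : Prop :=
  (∀ p s, 0 ≤ P p s) ∧ ∀ p, ∑ s : S, P p s = 1

/-- A probability vector on states. -/
def IsProbVec (μ : S → ℝ) : Prop :=
  (∀ s, 0 ≤ μ s) ∧ ∑ s : S, μ s = 1

/-- The block policy matrix `Π(x) ∈ ℝ^{S × (S×A)}`. -/
def piMat (x : S × A → ℝ) : Matrix S (S × A) ℝ :=
  Matrix.of fun s p => if p.1 = s then x p else 0

/-- The action-marginalization matrix `Ξ ∈ ℝ^{S × (S×A)}`. -/
def xiMat : Matrix S (S × A) ℝ :=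
  Matrix.of fun s p => if p.1 = s then (1 : ℝ) else 0

/-- `Ψ(x) = I - γ P Π(x)`. -/
def psiMat (P : Matrix (S × A) S ℝ) (γ : ℝ) (x : S × A → ℝ) :
    Matrix (S × A) (S × A) ℝ :=
  1 - γ • (P * piMat x)

/-- The discounted state-action occupancy `d(x) = (1-γ)(Ψ(x)ᵀ)⁻¹ Π(x)ᵀ μ0`. -/
def dOcc (P : Matrix (S × A) S ℝ) (γ : ℝ) (μ0 : S → ℝ) (x : S × A → ℝ) :
    S × A → ℝ :=
  (1 - γ) • (((psiMat P γ x)ᵀ)⁻¹ *ᵥ ((piMat x)ᵀ *ᵥ μ0))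

namespace Matrix

variable {n : Type*} [Fintype n] [DecidableEq n]

theorem isUnit_one_sub_smul_of_sum_abs_le_one {M : Matrix n n ℝ}
    (hM : ∀ i, ∑ j, |M i j| ≤ 1) {γ : ℝ} (hγ : |γ| < 1) : IsUnit (1 - γ • M) := by
  let := Matrix.linftyOpNormedRing (n := n) (α := ℝ)
  let := Matrix.linftyOpNormedSpace (m := n) (n := n) (R := ℝ) (α := ℝ)
  have hM_norm : ‖M‖ ≤ 1 := by
    rw [linfty_opNorm_def, NNReal.coe_le_one, Finset.sup_le_iff]
    intro i _
    rw [← NNReal.coe_le_one]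
    simpa [Real.norm_eq_abs] using hM i
  apply isUnit_one_sub_of_norm_lt_one
  calc ‖γ • M‖ = |γ| * ‖M‖ := by rw [norm_smul, Real.norm_eq_abs]
    _ ≤ |γ| * 1 := by gcongr
    _ < 1 := by rwa [mul_one]

end Matrix

omit [Fintype A] [DecidableEq A] [Nonempty S] [Nonempty A] in
theorem mul_piMat_apply (P : Matrix (S × A) S ℝ) (x : S × A → ℝ) (p q : S × A) :
    (P * piMat x) p q = P p q.1 * x q := by
  simp [Matrix.mul_apply, piMat]

omit [DecidableEq A] [Nonempty S] [Nonempty A] in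
theorem IsStochasticMat.sum_abs_mul_piMat {P : Matrix (S × A) S ℝ} (hP : IsStochasticMat P)
    {x : S × A → ℝ} (hx : IsPolicy x) (p : S × A) :
    ∑ q, |(P * piMat x) p q| = 1 := by
  simp_rw [mul_piMat_apply, abs_of_nonneg (mul_nonneg (hP.1 _ _) (hx.1 _)),
    Fintype.sum_prod_type, ← Finset.mul_sum, hx.2, mul_one]
  exact hP.2 p

omit [Nonempty S] [Nonempty A] in
theorem isUnit_psiMat {P : Matrix (S × A) S ℝ} (hP : IsStochasticMat P) {γ : ℝ}
    (hγ0 : 0 ≤ γ) (hγ1 : γ < 1) {x : S × A → ℝ} (hx : IsPolicy x) :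
    IsUnit (psiMat P γ x) :=
  isUnit_one_sub_smul_of_sum_abs_le_one (fun p => (hP.sum_abs_mul_piMat hx p).le)
    (abs_lt.2 ⟨by linarith, hγ1⟩)

omit [Nonempty S] [Nonempty A] in
theorem psiMat_transpose_mulVec_dOcc {P : Matrix (S × A) S ℝ} {γ : ℝ} {x : S × A → ℝ}
    (hΨ : IsUnit (psiMat P γ x)) (μ0 : S → ℝ) :
    (psiMat P γ x)ᵀ *ᵥ dOcc P γ μ0 x = (1 - γ) • ((piMat x)ᵀ *ᵥ μ0) := by
  have hdet : IsUnit (psiMat P γ x)ᵀ.det := by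
    rwa [det_transpose, ← isUnit_iff_isUnit_det]
  rw [dOcc, mulVec_smul, mulVec_mulVec, mul_nonsing_inv _ hdet, one_mulVec]

omit [Nonempty S] [Nonempty A] in
theorem dOcc_dotProduct_psiMat_mulVec {P : Matrix (S × A) S ℝ} {γ : ℝ} {x : S × A → ℝ}
    (hΨ : IsUnit (psiMat P γ x)) (μ0 : S → ℝ) (v : S × A → ℝ) :
    dOcc P γ μ0 x ⬝ᵥ (psiMat P γ x *ᵥ v) = (1 - γ) * (μ0 ⬝ᵥ (piMat x *ᵥ v)) := by
  rw [dotProduct_mulVec, ← mulVec_transpose, psiMat_transpose_mulVec_dOcc hΨ, smul_dotProduct,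
    mulVec_transpose, ← dotProduct_mulVec, smul_eq_mul]

theorem soft_objective_gap_general
    (P : Matrix (S × A) S ℝ) (hP : IsStochasticMat P)
    (γ : ℝ) (hγ0 : 0 ≤ γ) (hγ1 : γ < 1)
    (r : S × A → ℝ) (μ0 : S → ℝ)
    (x : S × A → ℝ) (hx : IsPolicy x) :
    ∀ q : S × A → ℝ,
      dOcc P γ μ0 x ⬝ᵥ (r - fun p => Real.log (x p))
        - (1 - γ) * (μ0 ⬝ᵥ (piMat x *ᵥ (q - fun p => Real.log (x p))))
      = dOcc P γ μ0 x ⬝ᵥ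
          (r + γ • ((P * piMat x) *ᵥ (q - fun p => Real.log (x p))) - q) := by
  intro q
  set ℓ : S × A → ℝ := fun p => Real.log (x p)
  have hδ : r + γ • ((P * piMat x) *ᵥ (q - ℓ)) - q = (r - ℓ) - psiMat P γ x *ᵥ (q - ℓ) := by
    rw [psiMat, sub_mulVec, one_mulVec, smul_mulVec]
    abel
  rw [hδ, dotProduct_sub (dOcc P γ μ0 x) (r - ℓ),
    dOcc_dotProduct_psiMat_mulVec (isUnit_psiMat hP hγ0 hγ1 hx)]

/-- objective gap for the entropy-regularized actor objective:
`d(π)ᵀ(r - ℓ) - (1-γ)μ0ᵀΠ(π)(q - ℓ) = d(π)ᵀ δ_E` where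
`δ_E = r + γPΠ(π)(q - ℓ) - q`. -/
theorem soft_objective_gap
    (P : Matrix (S × A) S ℝ) (hP : IsStochasticMat P)
    (γ : ℝ) (hγ0 : 0 ≤ γ) (hγ1 : γ < 1)
    (r : S × A → ℝ) (μ0 : S → ℝ) (hμ0 : IsProbVec μ0)
    (x : S × A → ℝ) (hx : IsPolicy x) (hxpos : ∀ p : S × A, 0 < x p) :
    ∀ q : S × A → ℝ,
      dOcc P γ μ0 x ⬝ᵥ (r - fun p => Real.log (x p))
        - (1 - γ) * (μ0 ⬝ᵥ (piMat x *ᵥ (q - fun p => Real.log (x p))))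
      = dOcc P γ μ0 x ⬝ᵥ
          (r + γ • ((P * piMat x) *ᵥ (q - fun p => Real.log (x p))) - q) :=
  soft_objective_gap_general P hP γ hγ0 hγ1 r μ0 x hx
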